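/- arXiv:1701.08495 — 2 statements merged into one kernel-verified Lean document; each statement's English description precedes it below -/
import Mathlib

section
/- Let k₁, k₂, m₁, m₂ ∈ (0,1) and let σ : ℕ → {1,2} be any sequence of indices. For every n ∈ ℕ, writing F_{σ,n} = f_{σ(n)} ∘ ⋯ ∘ f_{σ(1)} with f_i(x) = k_i x and G_{σ,n} = g_{σ(n)} ∘ ⋯ ∘ g_{σ(1)} with g_i(x) = m_i x, there exists a homeomorphism h : ℝ → ℝ such that h ∘ F_{σ,n} = G_{σ,n} ∘ h. -/
/-- The composition `f_{σ(n)} ∘ ⋯ ∘ f_{σ(1)}` of the maps of an IFS along a sequence `σ`. -/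
def seqComp {Λ : Type*} {α : Type*} (f : Λ → α → α) (σ : ℕ → Λ) : ℕ → α → α
  | 0 => id
  | n + 1 => f (σ (n + 1)) ∘ seqComp f σ n

lemma seqComp_mul (k : Fin 2 → ℝ) (σ : ℕ → Fin 2) (n : ℕ) (x : ℝ) :
    seqComp (fun i x => k i * x) σ n x = (∏ i ∈ Finset.range n, k (σ (i + 1))) * x := by
  induction n with
  | zero => simp [seqComp]
  | succ n ih => simp only [seqComp, Function.comp_apply, ih, Finset.prod_range_succ]; ring

/-- the odd power function -/
noncomputable def oddRpow (t : ℝ) (x : ℝ) : ℝ := if x < 0 then -((-x) ^ t) else x ^ t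

lemma oddRpow_strictMono {t : ℝ} (ht : 0 < t) : StrictMono (oddRpow t) := by
  intro a b hab
  unfold oddRpow
  by_cases ha : a < 0
  · by_cases hb : b < 0
    · simp only [if_pos ha, if_pos hb]
      have : (-b) ^ t < (-a) ^ t :=
        Real.rpow_lt_rpow (by linarith) (by linarith) ht
      linarith
    · simp only [if_pos ha, if_neg hb]
      have h1 : (0:ℝ) < (-a) ^ t := Real.rpow_pos_of_pos (by linarith) t
      have h2 : (0:ℝ) ≤ b ^ t := Real.rpow_nonneg (by linarith) t
      linarith
  · have hb : ¬ b < 0 := by push_neg at ha ⊢; linarith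
    simp only [if_neg ha, if_neg hb]
    exact Real.rpow_lt_rpow (by linarith) hab ht

lemma oddRpow_surjective {t : ℝ} (ht : 0 < t) : Function.Surjective (oddRpow t) := by
  intro y
  by_cases hy : y < 0
  · refine ⟨-((-y) ^ (1 / t)), ?_⟩
    have hpos : (0:ℝ) < (-y) ^ (1 / t) := Real.rpow_pos_of_pos (by linarith) _
    unfold oddRpow
    rw [if_pos (by linarith)]
    rw [neg_neg, show ((-y) ^ (1 / t)) ^ t = (-y) ^ (1 / t * t) from
      (Real.rpow_mul (by linarith) _ _).symm]
    rw [one_div_mul_cancel ht.ne', Real.rpow_one, neg_neg]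
  · refine ⟨y ^ (1 / t), ?_⟩
    have hy' : (0:ℝ) ≤ y := by linarith
    have hpos : (0:ℝ) ≤ y ^ (1 / t) := Real.rpow_nonneg hy' _
    unfold oddRpow
    rw [if_neg (by linarith)]
    rw [show (y ^ (1 / t)) ^ t = y ^ (1 / t * t) from (Real.rpow_mul hy' _ _).symm]
    rw [one_div_mul_cancel ht.ne', Real.rpow_one]

lemma conj_of_scaling {K M : ℝ} (hK0 : 0 < K) (hK1 : K < 1) (hM0 : 0 < M) (hM1 : M < 1) :
    ∃ h : ℝ ≃ₜ ℝ, ∀ x : ℝ, h (K * x) = M * h x := by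
  set t : ℝ := Real.logb K M with htdef
  have hlogK : Real.log K < 0 := Real.log_neg hK0 hK1
  have hlogM : Real.log M < 0 := Real.log_neg hM0 hM1
  have ht : 0 < t := div_pos_of_neg_of_neg hlogM hlogK
  have hKt : K ^ t = M := Real.rpow_logb hK0 (ne_of_lt hK1) hM0
  let e : ℝ ≃o ℝ := StrictMono.orderIsoOfSurjective _ (oddRpow_strictMono ht)
    (oddRpow_surjective ht)
  refine ⟨e.toHomeomorph, fun x => ?_⟩
  show oddRpow t (K * x) = M * oddRpow t x
  unfold oddRpow
  by_cases hx : x < 0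
  · have hKx : K * x < 0 := mul_neg_of_pos_of_neg hK0 hx
    rw [if_pos hx, if_pos hKx]
    rw [show -(K * x) = K * (-x) by ring,
      Real.mul_rpow hK0.le (by linarith), hKt]
    ring
  · push_neg at hx
    have hKx : 0 ≤ K * x := by positivity
    rw [if_neg (not_lt.mpr hx), if_neg (not_lt.mpr hKx)]
    rw [Real.mul_rpow hK0.le hx, hKt]

theorem stmt_5 (k m : Fin 2 → ℝ) (hk : ∀ i, k i ∈ Set.Ioo (0 : ℝ) 1)
    (hm : ∀ i, m i ∈ Set.Ioo (0 : ℝ) 1) (σ : ℕ → Fin 2) (n : ℕ) :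
    ∃ h : ℝ ≃ₜ ℝ, ∀ x : ℝ,
      h (seqComp (fun i x => k i * x) σ n x) = seqComp (fun i x => m i * x) σ n (h x) := by
  rcases n with _ | n
  · exact ⟨Homeomorph.refl ℝ, fun x => rfl⟩
  · set K := ∏ i ∈ Finset.range (n + 1), k (σ (i + 1)) with hKdef
    set M := ∏ i ∈ Finset.range (n + 1), m (σ (i + 1)) with hMdef
    have hK0 : 0 < K := Finset.prod_pos fun i _ => (hk _).1
    have hM0 : 0 < M := Finset.prod_pos fun i _ => (hm _).1
    have hK1 : K < 1 := by
      rw [hKdef, Finset.prod_range_succ]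
      have h1 : (∏ i ∈ Finset.range n, k (σ (i + 1))) ≤ 1 :=
        Finset.prod_le_one (fun i _ => (hk _).1.le) (fun i _ => (hk _).2.le)
      have h2 : (0:ℝ) < ∏ i ∈ Finset.range n, k (σ (i + 1)) :=
        Finset.prod_pos fun i _ => (hk _).1
      nlinarith [(hk (σ (n + 1))).1, (hk (σ (n + 1))).2]
    have hM1 : M < 1 := by
      rw [hMdef, Finset.prod_range_succ]
      have h1 : (∏ i ∈ Finset.range n, m (σ (i + 1))) ≤ 1 :=
        Finset.prod_le_one (fun i _ => (hm _).1.le) (fun i _ => (hm _).2.le)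
      have h2 : (0:ℝ) < ∏ i ∈ Finset.range n, m (σ (i + 1)) :=
        Finset.prod_pos fun i _ => (hm _).1
      nlinarith [(hm (σ (n + 1))).1, (hm (σ (n + 1))).2]
    obtain ⟨h, hh⟩ := conj_of_scaling hK0 hK1 hM0 hM1
    refine ⟨h, fun x => ?_⟩
    rw [seqComp_mul, seqComp_mul, ← hKdef, ← hMdef, hh]
end

section
/- Let f : ℝ → ℝ be a C¹ diffeomorphism fixing a point p, and suppose f is structurally stable in the sense that for every ε > 0 there is δ > 0 such that every C¹ diffeomorphism g with C¹-distance ρ₁(f,g) < δ is topologically conjugate to f via a homeomorphism h with |x - h(x)| < ε for all x. Then p is a hyperbolic fixed point, i.e., |f'(p)| ≠ 1. -/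
/-!
Suppose `|f'(p)| = 1`. A C¹-small perturbation supported near `p` turns `f` into a map that is
the isometry `x ↦ p ± (x - p)` on a neighbourhood of `p`, so all nearby points become periodic of
period `n = 1` or `2`; pulling back by the conjugacy, `f` has a whole interval of `n`-periodic
points. Adding to `f` a small bump supported in that interval destroys the `n`-periodic points
near its midpoint (for `n = 2` one first passes to a subinterval on one side of the fixed point,
so that an orbit meets the bump only once), yet a conjugacy moving points by less than a quarter
of the interval's length must send the midpoint to such a point.
-/

open Function Set

lemma deriv_ne_zero_of_leftInverse {f finv : ℝ → ℝ} (hf : Differentiable ℝ f)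
    (hfinv : Differentiable ℝ finv) (hli : LeftInverse finv f) (x : ℝ) : deriv f x ≠ 0 := by
  intro h
  have hcomp := (hfinv (f x)).hasDerivAt.comp x (hf x).hasDerivAt
  rw [show finv ∘ f = id from funext hli, h, mul_zero] at hcomp
  exact one_ne_zero ((hasDerivAt_id x).unique hcomp)

lemma injective_of_deriv_ne_zero {g : ℝ → ℝ} (hg : Differentiable ℝ g)
    (hd : ∀ x, deriv g x ≠ 0) : Injective g := by
  have rolle {x y : ℝ} (hxy : x < y) (he : g x = g y) : False := by
    obtain ⟨c, -, hc⟩ := exists_deriv_eq_zero hxy hg.continuous.continuousOn he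
    exact hd c hc
  intro x y he
  by_contra hne
  rcases lt_or_gt_of_ne hne with hxy | hyx
  exacts [rolle hxy he, rolle hyx he.symm]

lemma deriv_eq_zero_of_forall_notMem {ψ : ℝ → ℝ} {s : Set ℝ} (hs : IsClosed s)
    (hψ : ∀ y ∉ s, ψ y = 0) {x : ℝ} (hx : x ∉ s) : deriv ψ x = 0 := by
  have : ψ =ᶠ[nhds x] fun _ => 0 := Filter.mem_of_superset (hs.isOpen_compl.mem_nhds hx) hψ
  rw [this.deriv_eq, deriv_const]

lemma exists_contDiff_inverse {g : ℝ → ℝ} (hg : ContDiff ℝ 1 g) (hsurj : Surjective g)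
    (hd : ∀ x, deriv g x ≠ 0) :
    ∃ ginv : ℝ → ℝ, ContDiff ℝ 1 ginv ∧ LeftInverse ginv g ∧ RightInverse ginv g := by
  have hdiff := hg.differentiable one_ne_zero
  have hinj := injective_of_deriv_ne_zero hdiff hd
  set e := Equiv.ofBijective g ⟨hinj, hsurj⟩
  have hli : LeftInverse e.symm g := e.symm_apply_apply
  have hri : RightInverse e.symm g := e.apply_symm_apply
  have hcont : Continuous e.symm := by
    rcases hg.continuous.strictMono_of_inj hinj with hmono | hanti
    · exact Monotone.continuous_of_surjective (fun y y' hy => by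
        rwa [← hmono.le_iff_le, hri, hri]) hli.surjective
    · exact Monotone.continuous_of_surjective (β := ℝᵒᵈ) (fun y y' hy => by
        show e.symm y' ≤ e.symm y
        rwa [← hanti.le_iff_ge, hri, hri]) hli.surjective
  have hderiv (y : ℝ) : HasDerivAt e.symm (deriv g (e.symm y))⁻¹ y :=
    HasDerivAt.of_local_left_inverse hcont.continuousAt (hdiff _).hasDerivAt (hd _)
      (Filter.Eventually.of_forall hri)
  refine ⟨e.symm, contDiff_one_iff_deriv.2 ⟨fun y => (hderiv y).differentiableAt, ?_⟩, hli, hri⟩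
  rw [funext fun y => (hderiv y).deriv]
  exact ((hg.continuous_deriv le_rfl).comp hcont).inv₀ fun y => hd _

lemma surjective_of_eq_of_notMem_Icc {f g : ℝ → ℝ} (hf : Continuous f) (hf_inj : Injective f)
    (hf_surj : Surjective f) (hg : Continuous g) {a b : ℝ} (heq : ∀ x ∉ Icc a b, g x = f x) :
    Surjective g := by
  intro y
  obtain ⟨w, rfl⟩ := hf_surj y
  set u := min a w - 1
  set v := max b w + 1
  have hu : g u = f u := heq u fun h => by linarith [h.1, min_le_left a w]
  have hv : g v = f v := heq v fun h => by linarith [h.2, le_max_left b w]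
  have huw : u ≤ w := by linarith [min_le_right a w]
  have hwv : w ≤ v := by linarith [le_max_right b w]
  have hw : f w ∈ uIcc (g u) (g v) := by
    rw [hu, hv]
    rcases hf.strictMono_of_inj hf_inj with hmono | hanti
    · exact mem_uIcc_of_le (hmono.monotone huw) (hmono.monotone hwv)
    · exact mem_uIcc_of_ge (hanti.antitone hwv) (hanti.antitone huw)
  obtain ⟨x, -, hx⟩ := intermediate_value_uIcc hg.continuousOn hw
  exact ⟨x, hx⟩

lemma exists_abs_sub_inverse_le {f finv : ℝ → ℝ} (hf : Continuous f) (hfinv : ContDiff ℝ 1 finv)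
    (hli : LeftInverse finv f) (a b : ℝ) :
    ∃ M, 0 ≤ M ∧ ∀ g ginv : ℝ → ℝ, RightInverse ginv g → (∀ x ∉ Icc a b, g x = f x) →
      ∀ c ≤ 1, (∀ x, |g x - f x| ≤ c) → ∀ y, |finv y - ginv y| ≤ M * c := by
  set S := Metric.cthickening 1 (f '' Icc a b)
  have hS : IsCompact S := (isCompact_Icc.image hf).cthickening
  obtain ⟨K, hK⟩ := hfinv.locallyLipschitz.locallyLipschitzOn.exists_lipschitzOnWith_of_compact hS
  refine ⟨K, K.2, fun g ginv hri heq c hc1 hc y => ?_⟩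
  set x := ginv y
  have hgx : g x = y := hri y
  have hc0 : 0 ≤ c := (abs_nonneg _).trans (hc x)
  by_cases hx : x ∈ Icc a b
  · have hfx : f x ∈ S := Metric.self_subset_cthickening _ (mem_image_of_mem f hx)
    have hdist : dist y (f x) ≤ c := by rw [Real.dist_eq, ← hgx]; exact hc x
    have hy : y ∈ S := Metric.mem_cthickening_of_dist_le y (f x) 1 _ (mem_image_of_mem f hx)
      (hdist.trans hc1)
    have := hK.dist_le_mul y hy (f x) hfx
    rw [hli x, Real.dist_eq] at this
    exact this.trans (mul_le_mul_of_nonneg_left hdist K.2)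
  · rw [show finv y = x by rw [← hgx, heq x hx, hli], sub_self, abs_zero]
    exact mul_nonneg K.2 hc0

def PerturbationStable (f : ℝ → ℝ) : Prop :=
  ∀ a b : ℝ, ∀ ε > 0, ∃ η > 0, ∀ ψ : ℝ → ℝ, ContDiff ℝ 1 ψ → (∀ x ∉ Icc a b, ψ x = 0) →
    (∀ x, |ψ x| ≤ η) → (∀ x, |deriv ψ x| ≤ η) →
    ∃ h : ℝ ≃ₜ ℝ, (∀ x, |x - h x| < ε) ∧ Semiconj h f (fun x => f x + ψ x)

lemma perturbationStable_of_structurallyStable {f finv : ℝ → ℝ}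
    (hf : ContDiff ℝ 1 f) (hfinv : ContDiff ℝ 1 finv)
    (hli : LeftInverse finv f) (hri : RightInverse finv f)
    (hstab : ∀ ε > (0 : ℝ), ∃ δ > (0 : ℝ), ∀ g ginv : ℝ → ℝ,
      ContDiff ℝ 1 g → ContDiff ℝ 1 ginv →
      LeftInverse ginv g → RightInverse ginv g →
      (∃ c < δ, ∀ x y : ℝ,
        max |f x - g x| |finv x - ginv x| + |deriv f y - deriv g y| ≤ c) →
      ∃ h : ℝ ≃ₜ ℝ, (∀ x : ℝ, |x - h x| < ε) ∧ ∀ x : ℝ, h (f x) = g (h x)) :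
    PerturbationStable f := by
  intro a b ε hε
  obtain ⟨δ, hδ, hconj⟩ := hstab ε hε
  obtain ⟨M, hM, hinv⟩ := exists_abs_sub_inverse_le hf.continuous hfinv hli a b
  have hfd := hf.differentiable one_ne_zero
  have hf' := deriv_ne_zero_of_leftInverse hfd (hfinv.differentiable one_ne_zero) hli
  obtain ⟨μ, hμ, hμf'⟩ := isCompact_Icc.exists_forall_le' (a := 0)
    (hf.continuous_deriv le_rfl).abs.continuousOn fun x _ => abs_pos.2 (hf' x)
  -- `μ / 2` keeps `(f + ψ)'` away from zero, `δ / (M + 3)` gives `ρ₁(f, f + ψ) ≤ (M + 2) η < δ`.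
  set η := min (min 1 (μ / 2)) (δ / (M + 3))
  have hη1 : η ≤ 1 := (min_le_left _ _).trans (min_le_left _ _)
  have hημ : η ≤ μ / 2 := (min_le_left _ _).trans (min_le_right _ _)
  have hηδ : η ≤ δ / (M + 3) := min_le_right _ _
  have hη : 0 < η := lt_min (lt_min one_pos (half_pos hμ)) (by positivity)
  refine ⟨η, hη, fun ψ hψ hψ0 hψη hψ'η => ?_⟩
  set g := fun x => f x + ψ x
  have hg : ContDiff ℝ 1 g := hf.add hψ
  have hg' (x : ℝ) : deriv g x = deriv f x + deriv ψ x :=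
    deriv_add (hfd x) (hψ.differentiable one_ne_zero x)
  have hgf (x : ℝ) (hx : x ∉ Icc a b) : g x = f x := by simp [g, hψ0 x hx]
  have hgd (x : ℝ) : deriv g x ≠ 0 := by
    rw [hg']
    by_cases hx : x ∈ Icc a b
    · intro h
      have hfx := hμf' x hx
      rw [add_eq_zero_iff_eq_neg.1 h, abs_neg] at hfx
      linarith [hψ'η x]
    · rw [deriv_eq_zero_of_forall_notMem isClosed_Icc hψ0 hx, add_zero]
      exact hf' x
  have hgsurj : Surjective g :=
    surjective_of_eq_of_notMem_Icc hf.continuous hli.injective hri.surjective hg.continuous hgf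
  obtain ⟨ginv, hginv, hgli, hgri⟩ := exists_contDiff_inverse hg hgsurj hgd
  refine hconj g ginv hg hginv hgli hgri ⟨(M + 2) * η, ?_, fun x y => ?_⟩
  · calc (M + 2) * η < (M + 3) * η := by nlinarith
      _ ≤ δ := by rwa [le_div_iff₀' (by positivity)] at hηδ
  · have hfg : |f x - g x| ≤ η := by simpa [g] using hψη x
    have hfginv : |finv x - ginv x| ≤ M * η :=
      hinv g ginv hgri hgf η hη1 (fun x => by simpa [g] using hψη x) x
    have hfg' : |deriv f y - deriv g y| ≤ η := by simpa [hg'] using hψ'η y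
    have : max |f x - g x| |finv x - ginv x| ≤ (M + 1) * η :=
      max_le (by nlinarith) (by nlinarith)
    linarith

open Metric in
lemma exists_cutoff : ∃ B, ∀ (p : ℝ) {σ : ℝ}, 0 < σ → ∃ χ : ℝ → ℝ, ContDiff ℝ 1 χ ∧
    (∀ x, 0 ≤ χ x ∧ χ x ≤ 1) ∧ (∀ x ∈ closedBall p σ, χ x = 1) ∧
    (∀ x ∉ closedBall p (2 * σ), χ x = 0) ∧ ∀ x, |deriv χ x| ≤ B / σ := by
  let φ : ContDiffBump (0 : ℝ) := ⟨1, 2, one_pos, one_lt_two⟩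
  obtain ⟨B, hB⟩ := (φ.contDiff.continuous_deriv le_rfl).bounded_above_of_compact_support
    φ.hasCompactSupport.deriv
  refine ⟨B, fun p σ hσ => ?_⟩
  have hdist {x : ℝ} : dist ((x - p) / σ) 0 = |x - p| / σ := by
    rw [dist_zero_right, norm_div, Real.norm_eq_abs, Real.norm_eq_abs, abs_of_pos hσ]
  refine ⟨fun x => φ ((x - p) / σ), ?_, fun x => ⟨φ.nonneg, φ.le_one⟩, ?_, ?_, ?_⟩
  · exact φ.contDiff.comp ((contDiff_id.sub contDiff_const).div_const σ)
  · intro x hx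
    rw [mem_closedBall, Real.dist_eq] at hx
    apply φ.one_of_mem_closedBall
    rw [mem_closedBall, hdist, div_le_one hσ]
    simpa [φ] using hx
  · intro x hx
    rw [mem_closedBall, Real.dist_eq, not_le] at hx
    apply φ.zero_of_le_dist
    rw [hdist, le_div_iff₀ hσ]
    simpa [φ] using hx.le
  · intro x
    have hd : HasDerivAt (fun x => φ ((x - p) / σ)) (deriv φ ((x - p) / σ) * (1 / σ)) x :=
      (φ.contDiff.differentiable one_ne_zero _).hasDerivAt.comp x
        (((hasDerivAt_id x).sub_const p).div_const σ)
    rw [hd.deriv, abs_mul, abs_of_pos (one_div_pos.2 hσ), ← div_eq_mul_one_div]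
    exact div_le_div_of_nonneg_right (hB _) hσ.le

open Metric in
lemma exists_perturbation_eq_affine_near {f : ℝ → ℝ} (hf : ContDiff ℝ 1 f) (p : ℝ) {η : ℝ}
    (hη : 0 < η) :
    ∃ ψ : ℝ → ℝ, ContDiff ℝ 1 ψ ∧ (∀ x ∉ Icc (p - 1) (p + 1), ψ x = 0) ∧ (∀ x, |ψ x| ≤ η) ∧
      (∀ x, |deriv ψ x| ≤ η) ∧
      ∃ σ > 0, ∀ x ∈ closedBall p σ, f x + ψ x = f p + deriv f p * (x - p) := by
  obtain ⟨B, hcut⟩ := exists_cutoff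
  have hB : 0 ≤ B := by
    obtain ⟨χ, -, -, -, -, hχ'⟩ := hcut p one_pos
    simpa using (abs_nonneg _).trans (hχ' 0)
  set s := deriv f p
  set κ := η / (2 * B + 1)
  have hκ : 0 < κ := by positivity
  have hκη : (2 * B + 1) * κ = η := mul_div_cancel₀ η (by positivity)
  obtain ⟨σ, hσ, hσ1, hf'⟩ :
      ∃ σ > 0, 2 * σ ≤ 1 ∧ ∀ x ∈ closedBall p (2 * σ), |deriv f x - s| ≤ κ := by
    obtain ⟨ρ, hρ, hρf'⟩ := Metric.continuousAt_iff.1 (hf.continuous_deriv le_rfl).continuousAt κ hκ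
    refine ⟨min (ρ / 4) (1 / 2), by positivity, by linarith [min_le_right (ρ / 4) (1 / 2)],
      fun x hx => (hρf' ?_).le⟩
    linarith [mem_closedBall.1 hx, min_le_left (ρ / 4) (1 / 2)]
  obtain ⟨χ, hχ, hχ01, hχ1, hχ0, hχ'⟩ := hcut p hσ
  have hχ_abs (x : ℝ) : |χ x| ≤ 1 := abs_le.2 ⟨by linarith [(hχ01 x).1], (hχ01 x).2⟩
  set u := fun x => f x - (f p + s * (x - p))
  have hu_cd : ContDiff ℝ 1 u := hf.sub (contDiff_const.add (contDiff_const.mul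
    (contDiff_id.sub contDiff_const)))
  have hu' (x : ℝ) : HasDerivAt u (deriv f x - s) x :=
    (((hf.differentiable one_ne_zero x).hasDerivAt).sub
      ((((hasDerivAt_id x).sub_const p).const_mul s).const_add (f p))).congr_deriv (by ring)
  have hu (x : ℝ) (hx : x ∈ closedBall p (2 * σ)) : |u x| ≤ κ * (2 * σ) := by
    have := (convex_closedBall p (2 * σ)).norm_image_sub_le_of_norm_hasDerivWithin_le
      (fun y _ => (hu' y).hasDerivWithinAt) hf' (mem_closedBall_self (by positivity)) hx
    simp only [u, sub_self, mul_zero, add_zero, sub_zero, Real.norm_eq_abs] at this ⊢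
    nlinarith [mem_closedBall.1 hx, Real.dist_eq x p, abs_nonneg (x - p)]
  set ψ := fun x => -(χ x * u x)
  have hψ0 (x : ℝ) (hx : x ∉ closedBall p (2 * σ)) : ψ x = 0 := by simp [ψ, hχ0 x hx]
  refine ⟨ψ, (hχ.mul hu_cd).neg, fun x hx => hψ0 x fun hx' => hx ?_, fun x => ?_, fun x => ?_,
    σ, hσ, fun x hx => by simp [ψ, u, hχ1 x hx]⟩
  · rw [← Real.closedBall_eq_Icc]
    exact closedBall_subset_closedBall hσ1 hx'
  · by_cases hx : x ∈ closedBall p (2 * σ)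
    · calc |ψ x| = |χ x| * |u x| := by simp [ψ, abs_mul]
        _ ≤ 1 * (κ * (2 * σ)) := by gcongr; exacts [hχ_abs x, hu x hx]
        _ ≤ η := by nlinarith
    · rw [hψ0 x hx, abs_zero]; exact hη.le
  · by_cases hx : x ∈ closedBall p (2 * σ)
    · have hd : HasDerivAt ψ (-(deriv χ x * u x + χ x * (deriv f x - s))) x :=
        (((hχ.differentiable one_ne_zero x).hasDerivAt).mul (hu' x)).neg
      rw [hd.deriv, abs_neg, ← hκη]
      calc |deriv χ x * u x + χ x * (deriv f x - s)|
          ≤ |deriv χ x| * |u x| + |χ x| * |deriv f x - s| := by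
            rw [← abs_mul, ← abs_mul]; exact abs_add_le _ _
        _ ≤ B / σ * (κ * (2 * σ)) + 1 * κ := by
            gcongr; exacts [hχ' x, hu x hx, hχ_abs x, hf' x hx]
        _ = (2 * B + 1) * κ := by field_simp
    · rw [deriv_eq_zero_of_forall_notMem isClosed_closedBall hψ0 hx, abs_zero]
      exact hη.le

lemma iterate_eq_of_eqOn_closedBall {g : ℝ → ℝ} {p s σ : ℝ} (hs : |s| = 1)
    (hg : ∀ y ∈ Metric.closedBall p σ, g y = p + s * (y - p)) (n : ℕ) :
    ∀ y ∈ Metric.closedBall p σ, g^[n] y = p + s ^ n * (y - p) := by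
  induction n with
  | zero => simp
  | succ n ih =>
    intro y hy
    have hgy : g y ∈ Metric.closedBall p σ := by
      rw [Metric.mem_closedBall, Real.dist_eq, hg y hy, add_sub_cancel_left, abs_mul, hs, one_mul,
        ← Real.dist_eq]
      exact hy
    rw [iterate_succ_apply, ih (g y) hgy, hg y hy]
    ring

namespace PerturbationStable

variable {f : ℝ → ℝ}

lemma exists_Icc_isPeriodicPt (hP : PerturbationStable f) (hf : ContDiff ℝ 1 f) {p : ℝ}
    (hp : f p = p) (hs : |deriv f p| = 1) {n : ℕ} (hn : deriv f p ^ n = 1) :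
    ∃ a b, a < b ∧ ∀ t ∈ Icc a b, IsPeriodicPt f n t := by
  obtain ⟨η, hη, hconj⟩ := hP (p - 1) (p + 1) 1 one_pos
  obtain ⟨ψ, hψ, hψ0, hψη, hψ'η, σ, hσ, hlin⟩ := exists_perturbation_eq_affine_near hf p hη
  obtain ⟨h, -, hsemi⟩ := hconj ψ hψ hψ0 hψη hψ'η
  rw [hp] at hlin
  have hg (y : ℝ) (hy : y ∈ uIcc (p - σ) (p + σ)) : IsPeriodicPt (fun x => f x + ψ x) n y := by
    rw [uIcc_of_le (by linarith), ← Real.closedBall_eq_Icc] at hy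
    simp [IsPeriodicPt, IsFixedPt, iterate_eq_of_eqOn_closedBall hs hlin n y hy, hn]
  refine ⟨min (h.symm (p - σ)) (h.symm (p + σ)), max (h.symm (p - σ)) (h.symm (p + σ)),
    min_lt_max.2 fun he => by linarith [h.symm.injective he], fun t ht => ?_⟩
  obtain ⟨y, hy, rfl⟩ := intermediate_value_uIcc h.symm.continuous.continuousOn ht
  exact (hg y hy).map (hsemi.inverse_left h.symm_apply_apply h.apply_symm_apply)

lemma false_of_bump_destroys_isPeriodicPt (hP : PerturbationStable f) {a b : ℝ} (hab : a < b)
    {n : ℕ} (hm : IsPeriodicPt f n ((a + b) / 2))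
    (hbump : ∃ c₀ > 0, ∀ c ∈ Ioc 0 c₀, ∀ φ : ℝ → ℝ, (∀ x ∉ Icc a b, φ x = 0) →
      ∀ z ∈ Icc a b, φ z = 1 → ¬IsPeriodicPt (fun x => f x + c * φ x) n z) : False := by
  obtain ⟨c₀, hc₀, hdestroy⟩ := hbump
  set r := (b - a) / 2 with hr_def
  have hr : 0 < r := by linarith
  let φ : ContDiffBump ((a + b) / 2) := ⟨r / 2, r, half_pos hr, half_lt_self hr⟩
  obtain ⟨B, hB⟩ := (φ.contDiff.continuous_deriv le_rfl).bounded_above_of_compact_support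
    φ.hasCompactSupport.deriv
  have hB0 : 0 ≤ B := (norm_nonneg _).trans (hB 0)
  have hφ0 (x : ℝ) (hx : x ∉ Icc a b) : φ x = 0 := by
    refine φ.zero_of_le_dist (not_le.1 fun h => hx ?_).le
    change x ∈ Metric.closedBall _ r at h
    rw [Real.closedBall_eq_Icc] at h
    exact ⟨by linarith [h.1], by linarith [h.2]⟩
  obtain ⟨η, hη, hconj⟩ := hP a b (r / 2) (half_pos hr)
  set c := min c₀ (η / (B + 1))
  have hc : 0 < c := lt_min hc₀ (by positivity)
  have hcη : c * (B + 1) ≤ η := (le_div_iff₀ (by positivity)).1 (min_le_right _ _)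
  obtain ⟨h, hdisp, hsemi⟩ := hconj (fun x => c * φ x) (contDiff_const.mul φ.contDiff)
    (fun x hx => by simp [hφ0 x hx])
    (fun x => by
      rw [abs_mul, abs_of_pos hc, abs_of_nonneg φ.nonneg]
      nlinarith [φ.le_one (x := x)])
    (fun x => by
      rw [deriv_const_mul _ (φ.contDiff.differentiable one_ne_zero x), abs_mul, abs_of_pos hc]
      nlinarith [(Real.norm_eq_abs _).symm.trans_le (hB x)])
  have hz : |h ((a + b) / 2) - (a + b) / 2| ≤ r / 2 := by
    rw [abs_sub_comm]; exact (hdisp _).le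
  refine hdestroy c ⟨hc, min_le_left _ _⟩ φ hφ0 _ ?_ ?_ (hm.map hsemi)
  · obtain ⟨h1, h2⟩ := abs_le.1 hz
    exact ⟨by linarith, by linarith⟩
  · exact φ.one_of_mem_closedBall (by rwa [Metric.mem_closedBall, Real.dist_eq])

lemma false_of_forall_isFixedPt_Icc (hP : PerturbationStable f) {a b : ℝ} (hab : a < b)
    (hfix : ∀ t ∈ Icc a b, f t = t) : False :=
  hP.false_of_bump_destroys_isPeriodicPt hab (n := 1)
    (hfix _ ⟨by linarith, by linarith⟩) ⟨1, one_pos, fun c hc φ _ z hz hφz hper => by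
      have : z + c = z := by simpa [IsPeriodicPt, IsFixedPt, hfix z hz, hφz] using hper
      linarith [hc.1]⟩

end PerturbationStable

lemma StrictAnti.exists_Icc_subset_add_notMem {f : ℝ → ℝ} (hf : StrictAnti f) {a b : ℝ}
    (hab : a < b) : ∃ a' b', a' < b' ∧ Icc a' b' ⊆ Icc a b ∧
      ∃ c₀ > 0, ∀ z ∈ Icc a' b', ∀ c ∈ Ioc 0 c₀, f z + c ∉ Icc a' b' := by
  set q := (a + b) / 2 with hq_def
  by_cases hq : f q < q
  · refine ⟨q, b, by linarith, Icc_subset_Icc_left (by linarith), (q - f q) / 2, by linarith,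
      fun z hz c hc hmem => ?_⟩
    linarith [hf.antitone hz.1, hc.2, hmem.1]
  · refine ⟨a, (a + q) / 2, by linarith, Icc_subset_Icc_right (by linarith), 1, one_pos,
      fun z hz c hc hmem => ?_⟩
    linarith [hf (show z < q by linarith [hz.2]), hc.1, hmem.2]

lemma PerturbationStable.false_of_strictAnti_of_isPeriodicPt_two {f : ℝ → ℝ}
    (hP : PerturbationStable f) (hanti : StrictAnti f) {a b : ℝ} (hab : a < b)
    (hper : ∀ t ∈ Icc a b, IsPeriodicPt f 2 t) : False := by
  obtain ⟨a', b', hab', hsub, c₀, hc₀, hout⟩ := hanti.exists_Icc_subset_add_notMem hab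
  refine hP.false_of_bump_destroys_isPeriodicPt hab' (hper _ (hsub ⟨by linarith, by linarith⟩))
    ⟨c₀, hc₀, fun c hc φ hφ z hz hφz hzper => ?_⟩
  have hz2 : f (f z) = z := hper z (hsub hz)
  have : f (f z + c) = f (f z) := by
    simpa [IsPeriodicPt, IsFixedPt, hφz, hφ _ (hout z hz c hc), hz2] using hzper
  linarith [hanti.injective this, hc.1]

theorem stmt_18 (f finv : ℝ → ℝ) (p : ℝ)
    (hf : ContDiff ℝ 1 f) (hfinv : ContDiff ℝ 1 finv)
    (hli : Function.LeftInverse finv f) (hri : Function.RightInverse finv f)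
    (hp : f p = p)
    (hstab : ∀ ε > (0 : ℝ), ∃ δ > (0 : ℝ), ∀ g ginv : ℝ → ℝ,
      ContDiff ℝ 1 g → ContDiff ℝ 1 ginv →
      Function.LeftInverse ginv g → Function.RightInverse ginv g →
      (∃ c < δ, ∀ x y : ℝ,
        max |f x - g x| |finv x - ginv x| + |deriv f y - deriv g y| ≤ c) →
      ∃ h : ℝ ≃ₜ ℝ, (∀ x : ℝ, |x - h x| < ε) ∧ ∀ x : ℝ, h (f x) = g (h x)) :
    |deriv f p| ≠ 1 := by
  intro hs
  have hP := perturbationStable_of_structurallyStable hf hfinv hli hri hstab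
  rcases (abs_eq zero_le_one).1 hs with h1 | h1
  · obtain ⟨a, b, hab, hper⟩ := hP.exists_Icc_isPeriodicPt hf hp hs (n := 1) (by rw [h1, one_pow])
    exact hP.false_of_forall_isFixedPt_Icc hab hper
  · have hanti : StrictAnti f := (hf.continuous.strictMono_of_inj hli.injective).resolve_left
      fun hmono => by linarith [hmono.monotone.deriv_nonneg (x := p)]
    obtain ⟨a, b, hab, hper⟩ := hP.exists_Icc_isPeriodicPt hf hp hs (n := 2) (by rw [h1]; norm_num)
    exact hP.false_of_strictAnti_of_isPeriodicPt_two hanti hab hper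
end
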